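/- arXiv:1011.4228 — 3 statements merged into one kernel-verified Lean document; each statement's English description precedes it below -/
import Mathlib

section
/- Let S be a positively graded polynomial ring over a field and let M be a graded submodule of S^{1×r} of rank r (as a module over the domain S). Then M is a free S-module if and only if some (equivalently, any) minimal homogeneous generating set of M has exactly r elements. -/
/-!
If `s` spans `M` and `#s = r = rank M`, then `s` is linearly independent, since over a commutative
ring a spanning family of `finrank` many vectors is a basis; so `M` is free.

Conversely, let `M` be free of rank `r` and let `s` be a homogeneous generating set none of whose
elements lies in the span of the others. Taking the homogeneous component of degree `deg w` of a
relation `∑ fᵥ • v = 0` leaves `C c • w`, with `c` the constant term of `f_w`, plus a combination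
of the other generators; hence every `fᵥ` has zero constant term (graded Nakayama). Writing a
basis of `M` through `s` and `s` through that basis, the constant terms of the two coefficient
matrices satisfy `B₀ * A₀ = 1`, whence `#s ≤ r`. Since no set of fewer than `r` vectors spans a module of rank `r`, `#s = r` and
no proper subset of `s` generates `M`.
-/

open MvPolynomial Module Submodule

theorem Matrix.card_le_card_of_mul_eq_one {m n R : Type*} [Fintype m] [Fintype n] [DecidableEq m]
    [CommSemiring R] [StrongRankCondition R] {B : Matrix m n R} {A : Matrix n m R}
    (h : B * A = 1) : Fintype.card m ≤ Fintype.card n :=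
  calc Fintype.card m = (B * A).rank := by rw [h, rank_one]
    _ ≤ B.rank := rank_mul_le_left B A
    _ ≤ Fintype.card n := rank_le_card_width B

theorem Submodule.exists_subset_span_eq_forall_notMem_span_erase {R M : Type*} [Semiring R]
    [AddCommMonoid M] [Module R M] [DecidableEq M] (t : Finset M) :
    ∃ u ⊆ t, span R (u : Set M) = span R t ∧ ∀ v ∈ u, v ∉ span R (u.erase v : Set M) := by
  induction t using Finset.strongInduction with
  | H t ih =>
    by_cases h : ∃ v ∈ t, v ∈ span R (t.erase v : Set M)
    · obtain ⟨v, hv, hmem⟩ := h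
      obtain ⟨u, hu, hspan, hmin⟩ := ih _ (Finset.erase_ssubset hv)
      refine ⟨u, hu.trans (Finset.erase_subset v t), ?_, hmin⟩
      rw [hspan, ← span_insert_eq_span hmem, ← Finset.coe_insert, Finset.insert_erase hv]
    · push Not at h
      exact ⟨t, subset_rfl, rfl, h⟩

theorem Submodule.free_span_of_rank_eq_card {R M : Type*} [CommRing R] [AddCommGroup M]
    [Module R M] (s : Finset M) (h : Module.rank R (span R (s : Set M)) = s.card) :
    Module.Free R (span R (s : Set M)) := by
  rcases subsingleton_or_nontrivial R with _ | _
  · exact .of_subsingleton' R _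
  have hli : LinearIndependent R ((↑) : s → M) := by
    rw [linearIndependent_iff_card_eq_finrank_span, Subtype.range_coe, Set.finrank,
      finrank_eq_of_rank_eq h, Fintype.card_coe]
  exact .of_basis ((Basis.span hli).map (.ofEq _ _ (by rw [Subtype.range_coe])))

namespace MvPolynomial

section

variable {σ R : Type*} [CommSemiring R]

attribute [local instance] gradedAlgebra

theorem homogeneousComponent_mul_of_mem_right (f : MvPolynomial σ R) {g : MvPolynomial σ R}
    {e : ℕ} (hg : g ∈ homogeneousSubmodule σ R e) (n : ℕ) :
    homogeneousComponent n (f * g) =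
      if e ≤ n then homogeneousComponent (n - e) f * g else 0 := by
  simp only [← decomposition.decompose'_apply]
  exact DirectSum.coe_decompose_mul_of_right_mem (homogeneousSubmodule σ R) n hg

def IsHomogeneousVec {ι : Type*} (v : ι → MvPolynomial σ R) : Prop :=
  ∃ d, ∀ j, v j ∈ homogeneousSubmodule σ R d

end

variable {σ ι k : Type*} [Field k]

section

variable [DecidableEq (ι → MvPolynomial σ k)]

theorem mem_span_erase_of_sum_smul_eq_zero {s : Finset (ι → MvPolynomial σ k)}
    (hs : ∀ v ∈ s, IsHomogeneousVec v) {f : (ι → MvPolynomial σ k) → MvPolynomial σ k}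
    (hrel : ∑ v ∈ s, f v • v = 0) {w : ι → MvPolynomial σ k} (hw : w ∈ s)
    (hfw : constantCoeff (f w) ≠ 0) :
    w ∈ span (MvPolynomial σ k) (s.erase w : Set (ι → MvPolynomial σ k)) := by
  choose! D hD using hs
  set g : (ι → MvPolynomial σ k) → MvPolynomial σ k := fun v =>
    if D v ≤ D w then homogeneousComponent (D w - D v) (f v) else 0
  have hrel' : ∑ v ∈ s, g v • v = 0 := by
    have := congrArg ((homogeneousComponent (D w)).compLeft ι) hrel
    rw [map_sum, map_zero] at this
    rw [← this]
    refine Finset.sum_congr rfl fun v hv => ?_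
    ext j : 1
    simp [g, homogeneousComponent_mul_of_mem_right _ (hD v hv j)]
  have hgw : g w = C (constantCoeff (f w)) := by simp [g, constantCoeff]
  have hmem : g w • w ∈ span (MvPolynomial σ k) (s.erase w : Set (ι → MvPolynomial σ k)) := by
    rw [← Finset.add_sum_erase s _ hw, add_eq_zero_iff_eq_neg] at hrel'
    rw [hrel']
    exact neg_mem (sum_mem fun v hv => smul_mem _ _ (subset_span hv))
  exact (smul_mem_iff_of_isUnit _ (hgw ▸ (isUnit_iff_ne_zero.mpr hfw).map C)).1 hmem

theorem card_le_card_basis_of_forall_notMem_span_erase {s : Finset (ι → MvPolynomial σ k)}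
    (hs : ∀ v ∈ s, IsHomogeneousVec v)
    (hmin : ∀ v ∈ s, v ∉ span (MvPolynomial σ k) (s.erase v : Set (ι → MvPolynomial σ k)))
    {κ : Type*} [Fintype κ]
    (b : Basis κ (MvPolynomial σ k) (span (MvPolynomial σ k) (s : Set (ι → MvPolynomial σ k)))) :
    s.card ≤ Fintype.card κ := by
  have hA : ∀ i, ∃ a : (ι → MvPolynomial σ k) → MvPolynomial σ k,
      ∑ u ∈ s, a u • u = (b i : ι → MvPolynomial σ k) := fun i => by
    obtain ⟨a, -, ha⟩ := mem_span_finset.1 (b i).2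
    exact ⟨a, ha⟩
  choose A hA using hA
  let B : s → κ → MvPolynomial σ k := fun w => b.repr ⟨w, subset_span w.2⟩
  have hB : ∀ w : s, ∑ i, B w i • (b i : ι → MvPolynomial σ k) = w := fun w => by
    simpa only [coe_sum, SetLike.val_smul] using
      congrArg Subtype.val (b.sum_repr ⟨w, subset_span w.2⟩)
  have hcc : ∀ w u : s,
      ∑ i, constantCoeff (B w i) * constantCoeff (A i u) = if w = u then 1 else 0 := by
    intro w u
    let f : (ι → MvPolynomial σ k) → MvPolynomial σ k := fun v =>
      (if (w : ι → MvPolynomial σ k) = v then 1 else 0) - ∑ i, B w i * A i v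
    have hrel : ∑ v ∈ s, f v • v = 0 := by
      simp only [f, sub_smul, Finset.sum_sub_distrib, ite_smul, one_smul, zero_smul,
        Finset.sum_ite_eq, if_pos w.2, Finset.sum_smul, mul_smul]
      rw [Finset.sum_comm]
      simp_rw [← Finset.smul_sum, hA, hB, sub_self]
    have := not_not.1 (mt (mem_span_erase_of_sum_smul_eq_zero hs hrel u.2) (hmin u u.2))
    simp only [SetLike.coe_eq_coe, map_sub, MonoidWithZeroHom.map_ite_one_zero, map_sum, map_mul,
      sub_eq_zero, f] at this
    exact this.symm
  have hBA : (Matrix.of B).map constantCoeff *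
      (Matrix.of fun i (u : s) => A i u).map constantCoeff = 1 := by
    ext w u
    simp [Matrix.mul_apply, Matrix.one_apply, hcc]
  simpa using Matrix.card_le_card_of_mul_eq_one hBA

end

theorem exists_homogeneous_span_eq_card_le_finrank
    {M : Submodule (MvPolynomial σ k) (ι → MvPolynomial σ k)} [Free (MvPolynomial σ k) M]
    (hfg : M.FG) {H : Set (ι → MvPolynomial σ k)} (hH : ∀ v ∈ H, IsHomogeneousVec v)
    (hM : span (MvPolynomial σ k) H = M) :
    ∃ s : Finset (ι → MvPolynomial σ k), (∀ v ∈ s, IsHomogeneousVec v) ∧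
      span (MvPolynomial σ k) (s : Set (ι → MvPolynomial σ k)) = M ∧
      s.card ≤ finrank (MvPolynomial σ k) M := by
  classical
  obtain ⟨t, htH, ht⟩ := (fg_span_iff_fg_span_finset_subset H).1 (hM ▸ hfg)
  obtain ⟨s, hst, hs, hmin⟩ :=
    exists_subset_span_eq_forall_notMem_span_erase (R := MvPolynomial σ k) t
  have hhom : ∀ v ∈ s, IsHomogeneousVec v := fun v hv => hH v (htH (hst hv))
  obtain rfl : span (MvPolynomial σ k) (s : Set (ι → MvPolynomial σ k)) = M :=
    hs.trans (ht.symm.trans hM)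
  refine ⟨s, hhom, rfl, ?_⟩
  rw [finrank_eq_card_chooseBasisIndex]
  exact card_le_card_basis_of_forall_notMem_span_erase hhom hmin (Free.chooseBasis _ _)

end MvPolynomial

/-- Let `S = k[x₁,…,x_r]` (standard grading) and let `M` be a graded
submodule of `S^{1×r}` of rank `r`.  Then `M` is free iff some minimal homogeneous
generating set of `M` has exactly `r` elements. -/
theorem graded_submodule_free_iff_minimal_generators_card
    (k : Type) [Field k] (r : ℕ)
    (M : Submodule (MvPolynomial (Fin r) k) (Fin r → MvPolynomial (Fin r) k))
    (hgr : M = Submodule.span (MvPolynomial (Fin r) k)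
      {v | v ∈ M ∧ ∃ d, ∀ j, v j ∈ homogeneousSubmodule (Fin r) k d})
    (hrank : Module.rank (MvPolynomial (Fin r) k) M = r) :
    Module.Free (MvPolynomial (Fin r) k) M ↔
      ∃ s : Finset (Fin r → MvPolynomial (Fin r) k),
        (∀ v ∈ s, ∃ d, ∀ j, v j ∈ homogeneousSubmodule (Fin r) k d) ∧
        Submodule.span (MvPolynomial (Fin r) k) (s : Set (Fin r → MvPolynomial (Fin r) k)) = M ∧
        (∀ u ⊆ s, Submodule.span (MvPolynomial (Fin r) k)
          (u : Set (Fin r → MvPolynomial (Fin r) k)) = M → u = s) ∧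
        s.card = r := by
  have card_ge : ∀ u : Finset (Fin r → MvPolynomial (Fin r) k),
      span (MvPolynomial (Fin r) k) (u : Set (Fin r → MvPolynomial (Fin r) k)) = M →
        r ≤ u.card := fun u hu => by
    have := rank_span_finset_le (R := MvPolynomial (Fin r) k) u
    rw [hu, hrank] at this
    exact_mod_cast this
  constructor
  · intro hfree
    obtain ⟨s, hhom, hspan, hcard⟩ := exists_homogeneous_span_eq_card_le_finrank
      (IsNoetherian.noetherian M) (fun v hv => hv.2) hgr.symm
    rw [finrank_eq_of_rank_eq hrank] at hcard
    exact ⟨s, hhom, hspan, fun u hu hspanu =>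
      Finset.eq_of_subset_of_card_le hu (hcard.trans (card_ge u hspanu)),
      le_antisymm hcard (card_ge s hspan)⟩
  · rintro ⟨s, -, rfl, -, hcard⟩
    exact free_span_of_rank_eq_card s (by rw [hrank, hcard])
end

section
/- The reflection arrangement of type D_r (defining polynomial ∏_{1≤i<j≤r}(x_i−x_j)(x_i+x_j)) is free with exponents {1, 3, 5, …, 2r−3, r−1}. -/
open MvPolynomial

/-- the degree-1 polynomial `∑ v j · x_j ∈ ℝ[x₁,…,x_n]` attached to a covector `v`. -/
noncomputable def linpoly (n : ℕ) (v : Fin n → ℝ) : MvPolynomial (Fin n) ℝ :=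
  ∑ j, C (v j) * X j

/-- The central arrangement in `ℝ^n` with defining polynomial `Q` is free with
exponents `e`: the module `D(A) = {θ : θ(Q) ∈ Q·S}` of `A`-derivations over
`S = ℝ[x₁,…,x_n]` has a free homogeneous basis `θ₁,…,θ_n` whose polynomial degrees
form the multiset `e`. -/
def FreeWithExp (n : ℕ) (Q : MvPolynomial (Fin n) ℝ) (e : Multiset ℕ) : Prop :=
  ∃ (θ : Fin n → Derivation ℝ (MvPolynomial (Fin n) ℝ) (MvPolynomial (Fin n) ℝ))
    (d : Fin n → ℕ),
    Finset.univ.val.map d = e ∧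
    (∀ k, θ k Q ∈ Ideal.span {Q}) ∧
    (∀ k j, θ k (X j) ∈ homogeneousSubmodule (Fin n) ℝ (d k)) ∧
    LinearIndependent (MvPolynomial (Fin n) ℝ) θ ∧
    (∀ η : Derivation ℝ (MvPolynomial (Fin n) ℝ) (MvPolynomial (Fin n) ℝ),
      η Q ∈ Ideal.span {Q} →
        η ∈ Submodule.span (MvPolynomial (Fin n) ℝ) (Set.range θ))

/-!
Saito's criterion: if derivations `θ₁, …, θ_r` with `θ_k Q ∈ (Q)` have coefficient matrix
`(θ_k x_j)` whose determinant is a nonzero multiple of `Q = ∏ α_H`, they form a basis of `D(A)`.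
Each `α_H` divides the determinant of the coefficient matrix of any `r` derivations of `D(A)`
(a row operation produces the row `(θ_k α_H)_k`), and the `α_H` are pairwise non-associated
primes, so `Q` divides it; hence Cramer's rule writes every `η ∈ D(A)` with polynomial
coefficients.

For `D_r` take `θ_k = ∑_j x_j^{2k+1} ∂_j` for `k < r - 1` and `θ_{r-1} = ∑_j (∏_{l ≠ j} x_l) ∂_j`.
Both `x_i - x_j` and `x_i + x_j` divide `θ_k(x_i) ∓ θ_k(x_j)`, and multiplying row `j` of the
coefficient matrix by `x_j` gives, up to a column rotation and the factor `x₁ ⋯ x_r`, the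
Vandermonde matrix of `x₁², …, x_r²`, whose determinant `∏_{i<j} (x_j² - x_i²)` is `±Q`.
-/

open Matrix

theorem Derivation.dvd_apply_of_prod_dvd {R A ι : Type*} [CommSemiring R] [CommRing A]
    [Algebra R A] (D : Derivation R A A) {s : Finset ι} {α : ι → A}
    (hprime : ∀ H ∈ s, Prime (α H)) (hdist : ∀ H ∈ s, ∀ H' ∈ s, α H ∣ α H' → H = H')
    (h : (∏ H ∈ s, α H) ∣ D (∏ H ∈ s, α H)) {H : ι} (hH : H ∈ s) : α H ∣ D (α H) := by
  classical
  rw [← Finset.mul_prod_erase s α hH, D.leibniz, smul_eq_mul, smul_eq_mul] at h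
  have hrest : α H ∣ (∏ H' ∈ s.erase H, α H') * D (α H) :=
    (dvd_add_right (dvd_mul_right _ _)).mp ((dvd_mul_right _ _).trans h)
  refine ((hprime H hH).dvd_or_dvd hrest).resolve_left fun hdvd => ?_
  obtain ⟨H', hH', hdvd'⟩ := ((hprime H hH).dvd_finsetProd_iff α).mp hdvd
  exact Finset.ne_of_mem_erase hH' (hdist H hH H' (Finset.mem_of_mem_erase hH') hdvd').symm

theorem Derivation.prod_dvd_apply_prod {R A ι : Type*} [CommSemiring R] [CommSemiring A]
    [Algebra R A] (D : Derivation R A A) (s : Finset ι) (α : ι → A)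
    (h : ∀ H ∈ s, α H ∣ D (α H)) : (∏ H ∈ s, α H) ∣ D (∏ H ∈ s, α H) := by
  classical
  induction s using Finset.induction_on with
  | empty => simp
  | insert H s hH ih =>
    obtain ⟨u, hu⟩ := ih fun H' hH' => h H' (Finset.mem_insert_of_mem hH')
    obtain ⟨w, hw⟩ := h H (Finset.mem_insert_self H s)
    refine ⟨u + w, ?_⟩
    rw [Finset.prod_insert hH, D.leibniz, smul_eq_mul, smul_eq_mul, hu, hw]
    ring

theorem Derivation.finset_sum_apply {R A M ι : Type*} [CommSemiring R] [CommSemiring A]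
    [Algebra R A] [AddCommMonoid M] [Module A M] [Module R M] (s : Finset ι)
    (D : ι → Derivation R A M) (a : A) : (∑ k ∈ s, D k) a = ∑ k ∈ s, D k a :=
  (congrFun (map_sum Derivation.coeFnAddMonoidHom D s) a).trans (Finset.sum_apply _ _ _)

theorem Matrix.exists_mulVec_eq_of_det_dvd_cramer {n R : Type*} [Fintype n] [DecidableEq n]
    [CommRing R] [IsDomain R] {A : Matrix n n R} (hA : A.det ≠ 0) {b : n → R}
    (h : ∀ k, A.det ∣ A.cramer b k) : ∃ p, A *ᵥ p = b := by
  choose p hp using h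
  refine ⟨p, funext fun j => mul_left_cancel₀ hA ?_⟩
  have := congrFun (A.mulVec_cramer b) j
  rw [show A.cramer b = A.det • p from funext hp, mulVec_smul] at this
  simpa using this

theorem MvPolynomial.prime_X_sub_C_mul_X {σ R : Type*} [CommRing R] [IsDomain R] {i j : σ}
    (hij : i ≠ j) (c : R) : Prime (X i - C c * X j : MvPolynomial σ R) := by
  classical
  let e := (renameEquiv R (Equiv.optionSubtypeNe i).symm).trans (optionEquivLeft R {l // l ≠ i})
  have he : e (X i - C c * X j) = Polynomial.X - Polynomial.C (C c * X ⟨j, hij.symm⟩) := by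
    simp [e, Equiv.optionSubtypeNe_symm_apply, hij.symm, ← algebraMap_eq]
  exact (MulEquiv.prime_iff e.toMulEquiv).mp (he ▸ Polynomial.prime_X_sub_C _)

theorem Finset.prod_erase_sub_mul_prod_erase {ι R : Type*} [DecidableEq ι] [CommRing R]
    {t : Finset ι} {i j : ι} (hi : i ∈ t) (hj : j ∈ t) (hij : i ≠ j) (f : ι → R) (s : R) :
    ∏ l ∈ t.erase i, f l - s * ∏ l ∈ t.erase j, f l =
      (f j - s * f i) * ∏ l ∈ (t.erase i).erase j, f l := by
  rw [← Finset.mul_prod_erase _ _ (Finset.mem_erase.mpr ⟨hij.symm, hj⟩),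
    ← Finset.mul_prod_erase _ _ (Finset.mem_erase.mpr ⟨hij, hi⟩), Finset.erase_right_comm]
  ring

section Saito

variable {n : ℕ}

local notation "S" => MvPolynomial (Fin n) ℝ

theorem Derivation.apply_linpoly (θ : Derivation ℝ S S) (v : Fin n → ℝ) :
    θ (linpoly n v) = ∑ j, C (v j) * θ (X j) := by
  simp [linpoly, ← smul_eq_C_mul]

noncomputable def derivMatrix (θ : Fin n → Derivation ℝ S S) : Matrix (Fin n) (Fin n) S :=
  of fun j k => θ k (X j)

theorem derivMatrix_update (θ : Fin n → Derivation ℝ S S) (k : Fin n) (η : Derivation ℝ S S) :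
    derivMatrix (Function.update θ k η) = (derivMatrix θ).updateCol k fun j => η (X j) := by
  ext j k'
  by_cases h : k' = k
  · subst h; simp [derivMatrix]
  · simp [derivMatrix, h]

theorem derivMatrix_mulVec (θ : Fin n → Derivation ℝ S S) (g : Fin n → S) (j : Fin n) :
    (derivMatrix θ *ᵥ g) j = (∑ k, g k • θ k) (X j) := by
  simp [derivMatrix, mulVec, dotProduct, Derivation.finset_sum_apply, mul_comm]

theorem linpoly_dvd_det_derivMatrix {θ : Fin n → Derivation ℝ S S} {v : Fin n → ℝ}
    (hv : v ≠ 0) (h : ∀ k, linpoly n v ∣ θ k (linpoly n v)) :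
    linpoly n v ∣ (derivMatrix θ).det := by
  obtain ⟨j₀, hj₀⟩ := Function.ne_iff.mp hv
  choose w hw using h
  have hrow : ∑ j, (C (v j) : S) • derivMatrix θ j = linpoly n v • w := by
    ext k
    simp [derivMatrix, ← hw, Derivation.apply_linpoly]
  have := (derivMatrix θ).det_updateRow_sum j₀ (fun j => C (v j))
  rw [hrow, det_updateRow_smul, smul_eq_mul] at this
  exact (((Ne.isUnit hj₀).map C).dvd_mul_left).mp (Dvd.intro _ this)

theorem prod_linpoly_dvd_det_derivMatrix {ι : Type*} {s : Finset ι} {v : ι → Fin n → ℝ}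
    (hprime : ∀ H ∈ s, Prime (linpoly n (v H)))
    (hdist : ∀ H ∈ s, ∀ H' ∈ s, linpoly n (v H) ∣ linpoly n (v H') → H = H')
    {θ : Fin n → Derivation ℝ S S}
    (hθ : ∀ k, (∏ H ∈ s, linpoly n (v H)) ∣ θ k (∏ H ∈ s, linpoly n (v H))) :
    (∏ H ∈ s, linpoly n (v H)) ∣ (derivMatrix θ).det := by
  refine Finset.prod_dvd_of_isRelPrime (fun H hH H' hH' hne => ?_) fun H hH => ?_
  · exact (hprime H hH).irreducible.isRelPrime_iff_not_dvd.mpr fun h => hne (hdist H hH H' hH' h)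
  · refine linpoly_dvd_det_derivMatrix (fun hv => (hprime H hH).ne_zero ?_) fun k => ?_
    · simp [hv, linpoly]
    · exact (θ k).dvd_apply_of_prod_dvd hprime hdist (hθ k) hH

theorem linearIndependent_of_det_derivMatrix_ne_zero {θ : Fin n → Derivation ℝ S S}
    (hθ : (derivMatrix θ).det ≠ 0) : LinearIndependent S θ := by
  refine Fintype.linearIndependent_iff.mpr fun g hg => ?_
  refine congrFun (eq_zero_of_mulVec_eq_zero hθ (funext fun j => ?_))
  simp [derivMatrix_mulVec, hg]

theorem mem_span_of_det_derivMatrix_dvd {θ : Fin n → Derivation ℝ S S}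
    (hθ : (derivMatrix θ).det ≠ 0) {η : Derivation ℝ S S}
    (h : ∀ k, (derivMatrix θ).det ∣ (derivMatrix (Function.update θ k η)).det) :
    η ∈ Submodule.span S (Set.range θ) := by
  obtain ⟨p, hp⟩ := exists_mulVec_eq_of_det_dvd_cramer hθ (b := fun j => η (X j))
    fun k => by simpa [cramer_apply, derivMatrix_update] using h k
  have hη : η = ∑ k, p k • θ k :=
    derivation_ext fun j => by rw [← derivMatrix_mulVec, hp]
  rw [hη]
  exact Submodule.sum_mem _ fun k _ => Submodule.smul_mem _ _ (Submodule.subset_span ⟨k, rfl⟩)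

theorem freeWithExp_of_det_derivMatrix_associated {ι : Type*} (s : Finset ι)
    (v : ι → Fin n → ℝ) (hprime : ∀ H ∈ s, Prime (linpoly n (v H)))
    (hdist : ∀ H ∈ s, ∀ H' ∈ s, linpoly n (v H) ∣ linpoly n (v H') → H = H')
    (θ : Fin n → Derivation ℝ S S) (d : Fin n → ℕ)
    (hθ : ∀ k, (∏ H ∈ s, linpoly n (v H)) ∣ θ k (∏ H ∈ s, linpoly n (v H)))
    (hhom : ∀ k j, θ k (X j) ∈ homogeneousSubmodule (Fin n) ℝ (d k))
    (hdet : Associated (derivMatrix θ).det (∏ H ∈ s, linpoly n (v H))) :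
    FreeWithExp n (∏ H ∈ s, linpoly n (v H)) (Finset.univ.val.map d) := by
  have hQ : (∏ H ∈ s, linpoly n (v H)) ≠ 0 :=
    Finset.prod_ne_zero_iff.mpr fun H hH => (hprime H hH).ne_zero
  have hdet0 : (derivMatrix θ).det ≠ 0 := fun h => hQ (hdet.eq_zero_iff.mp h)
  refine ⟨θ, d, rfl, fun k => Ideal.mem_span_singleton.mpr (hθ k), hhom,
    linearIndependent_of_det_derivMatrix_ne_zero hdet0, fun η hη => ?_⟩
  refine mem_span_of_det_derivMatrix_dvd hdet0 fun k => hdet.dvd_iff_dvd_left.mpr ?_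
  refine prod_linpoly_dvd_det_derivMatrix hprime hdist fun k' => ?_
  by_cases h : k' = k
  · subst h; simpa using Ideal.mem_span_singleton.mp hη
  · simpa [h] using hθ k'

end Saito

section TypeD

variable {r : ℕ}

theorem linpoly_single_sub_single (i j : Fin r) (s : ℝ) :
    linpoly r (Pi.single i 1 - Pi.single j s) = X i - C s * X j := by
  simp [linpoly, Pi.single_apply, sub_mul, Finset.sum_sub_distrib, apply_ite C, ite_mul]

/-- The hyperplane `((i, j), s)` is `x_i = s x_j`. -/
noncomputable def hyperplanesD (r : ℕ) : Finset ((Fin r × Fin r) × ℝ) :=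
  Finset.univ.filter (fun p : Fin r × Fin r => p.1 < p.2) ×ˢ {1, -1}

noncomputable def normalD (q : (Fin r × Fin r) × ℝ) : Fin r → ℝ :=
  Pi.single q.1.1 1 - Pi.single q.1.2 q.2

theorem mem_hyperplanesD {q : (Fin r × Fin r) × ℝ} :
    q ∈ hyperplanesD r ↔ q.1.1 < q.1.2 ∧ (q.2 = 1 ∨ q.2 = -1) := by
  simp [hyperplanesD]

theorem sq_eq_one_of_mem_hyperplanesD {q : (Fin r × Fin r) × ℝ} (hq : q ∈ hyperplanesD r) :
    q.2 ^ 2 = 1 := by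
  rcases (mem_hyperplanesD.mp hq).2 with h | h <;> simp [h]

theorem prod_linpoly_normalD :
    ∏ q ∈ hyperplanesD r, linpoly r (normalD q) =
      ∏ p ∈ Finset.univ.filter (fun p : Fin r × Fin r => p.1 < p.2),
        ((X p.1 - X p.2) * (X p.1 + X p.2)) := by
  rw [hyperplanesD, Finset.prod_product]
  refine Finset.prod_congr rfl fun p _ => ?_
  rw [Finset.prod_pair (by norm_num)]
  simp [normalD, linpoly_single_sub_single, sub_neg_eq_add]

theorem prime_linpoly_normalD {q : (Fin r × Fin r) × ℝ} (hq : q ∈ hyperplanesD r) :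
    Prime (linpoly r (normalD q)) := by
  rw [normalD, linpoly_single_sub_single]
  exact prime_X_sub_C_mul_X (mem_hyperplanesD.mp hq).1.ne _

theorem eq_of_X_sub_C_mul_X_dvd {i j a b : Fin r} {s t : ℝ} (hij : i < j) (hab : a < b)
    (hs : s ^ 2 = 1) (ht : t ^ 2 = 1)
    (h : (X i - C s * X j : MvPolynomial (Fin r) ℝ) ∣ X a - C t * X b) :
    i = a ∧ j = b ∧ s = t := by
  -- `x` lies on `x_i = s x_j`, and `|x l| = f l + 1` are distinct except for `|x_i| = |x_j|`.
  let f : Fin r → ℕ := fun l => if l = i then j else l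
  let x : Fin r → ℝ := fun l => (if l = i then s else 1) * ((f l : ℝ) + 1)
  have hx : ∀ l, x l ^ 2 = ((f l : ℝ) + 1) ^ 2 := fun l => by
    by_cases hl : l = i <;> simp [x, hl, mul_pow, hs]
  obtain ⟨g, hg⟩ := h
  have hxab : x a = t * x b := by
    have hα : eval x (X i - C s * X j) = 0 := by simp [x, f, hij.ne']
    have := congrArg (eval x) hg
    rw [map_mul, hα, zero_mul, map_sub, map_mul, eval_X, eval_X, eval_C] at this
    linarith
  have hfab : f a = f b := by
    have hsq : ((f a : ℝ) + 1) ^ 2 = ((f b : ℝ) + 1) ^ 2 := by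
      rw [← hx, ← hx, hxab, mul_pow, ht, one_mul]
    have := (sq_eq_sq₀ (by positivity) (by positivity)).mp hsq
    exact_mod_cast (by linarith : (f a : ℝ) = f b)
  obtain ⟨hai, hbj⟩ : a = i ∧ b = j := by
    simp only [f] at hfab
    split_ifs at hfab with ha hb hb <;> omega
  refine ⟨hai.symm, hbj.symm, mul_right_cancel₀ (by positivity : ((j : ℕ) : ℝ) + 1 ≠ 0) ?_⟩
  simpa [x, f, hai, hbj, hij.ne'] using hxab

theorem eq_of_linpoly_normalD_dvd {q q' : (Fin r × Fin r) × ℝ} (hq : q ∈ hyperplanesD r)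
    (hq' : q' ∈ hyperplanesD r) (h : linpoly r (normalD q) ∣ linpoly r (normalD q')) :
    q = q' := by
  rw [normalD, normalD, linpoly_single_sub_single, linpoly_single_sub_single] at h
  obtain ⟨h1, h2, h3⟩ := eq_of_X_sub_C_mul_X_dvd (mem_hyperplanesD.mp hq).1
    (mem_hyperplanesD.mp hq').1 (sq_eq_one_of_mem_hyperplanesD hq)
    (sq_eq_one_of_mem_hyperplanesD hq') h
  exact Prod.ext (Prod.ext h1 h2) h3

noncomputable def basisD (r : ℕ) (k : Fin r) :
    Derivation ℝ (MvPolynomial (Fin r) ℝ) (MvPolynomial (Fin r) ℝ) :=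
  mkDerivation ℝ fun j =>
    if (k : ℕ) < r - 1 then X j ^ (2 * (k : ℕ) + 1) else ∏ l ∈ Finset.univ.erase j, X l

theorem basisD_X (k j : Fin r) : basisD r k (X j) =
    if (k : ℕ) < r - 1 then X j ^ (2 * (k : ℕ) + 1) else ∏ l ∈ Finset.univ.erase j, X l :=
  mkDerivation_X _ _ _

theorem basisD_X_mem_homogeneousSubmodule (k j : Fin r) :
    basisD r k (X j) ∈ homogeneousSubmodule (Fin r) ℝ
      (if (k : ℕ) < r - 1 then 2 * (k : ℕ) + 1 else r - 1) := by
  rw [mem_homogeneousSubmodule, basisD_X]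
  split_ifs
  · exact isHomogeneous_X_pow _ _
  · have := IsHomogeneous.prod (Finset.univ.erase j) (fun l => (X l : MvPolynomial (Fin r) ℝ))
      (fun _ => 1) fun l _ => isHomogeneous_X _ _
    simpa [Finset.card_erase_of_mem] using this

theorem X_sub_C_mul_X_dvd_basisD (k : Fin r) {i j : Fin r} (hij : i ≠ j) {s : ℝ}
    (hs : s ^ 2 = 1) : X i - C s * X j ∣ basisD r k (X i - C s * X j) := by
  have hθ : basisD r k (X i - C s * X j) = basisD r k (X i) - C s * basisD r k (X j) := by
    rw [map_sub, ← smul_eq_C_mul, Derivation.map_smul, smul_eq_C_mul]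
  rw [hθ, basisD_X, basisD_X]
  split_ifs
  · have hodd : (C s * X j : MvPolynomial (Fin r) ℝ) ^ (2 * (k : ℕ) + 1) =
        C s * X j ^ (2 * (k : ℕ) + 1) := by
      rw [mul_pow, ← map_pow, pow_succ, pow_mul, hs, one_pow, one_mul]
    exact hodd ▸ sub_dvd_pow_sub_pow _ _ _
  · rw [Finset.prod_erase_sub_mul_prod_erase (Finset.mem_univ i) (Finset.mem_univ j) hij]
    have hCs : (C s : MvPolynomial (Fin r) ℝ) ^ 2 = 1 := by rw [← map_pow, hs, map_one]
    exact Dvd.dvd.mul_right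
      ⟨-C s, by linear_combination (-X j : MvPolynomial (Fin r) ℝ) * hCs⟩ _

theorem linpoly_normalD_dvd_basisD (k : Fin r) {q : (Fin r × Fin r) × ℝ}
    (hq : q ∈ hyperplanesD r) : linpoly r (normalD q) ∣ basisD r k (linpoly r (normalD q)) := by
  rw [normalD, linpoly_single_sub_single]
  exact X_sub_C_mul_X_dvd_basisD k (mem_hyperplanesD.mp hq).1.ne (sq_eq_one_of_mem_hyperplanesD hq)

theorem det_derivMatrix_basisD_associated :
    Associated (derivMatrix (basisD r)).det
      (vandermonde fun j => (X j ^ 2 : MvPolynomial (Fin r) ℝ)).det := by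
  rcases r with _ | n
  · simp [det_fin_zero]
  set P : MvPolynomial (Fin (n + 1)) ℝ := ∏ l, X l
  set u : Fin (n + 1) → MvPolynomial (Fin (n + 1)) ℝ := fun k => if (k : ℕ) < n then 1 else P
  set V := vandermonde fun j => (X j ^ 2 : MvPolynomial (Fin (n + 1)) ℝ)
  have hentry : (of fun j k => X j * derivMatrix (basisD (n + 1)) j k) =
      of fun j k => u k * V.submatrix id (finRotate (n + 1)) j k := by
    ext j k : 1
    simp only [of_apply, derivMatrix, basisD_X, submatrix_apply, vandermonde_apply, id, V, u]
    induction k using Fin.lastCases with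
    | last => simp [P, Finset.mul_prod_erase]
    | cast i =>
      simp only [Fin.val_castSucc, add_tsub_cancel_right, Fin.is_lt, ↓reduceIte, finRotate_apply,
        Fin.coeSucc_eq_succ, Fin.val_succ, one_mul]
      ring
  have hu : ∏ k, u k = P := by simp [u, Fin.prod_univ_castSucc]
  have hP : P ≠ 0 := Finset.prod_ne_zero_iff.mpr fun l _ => X_ne_zero l
  have key : P * (derivMatrix (basisD (n + 1))).det =
      P * ((Equiv.Perm.sign (finRotate (n + 1)) : MvPolynomial (Fin (n + 1)) ℝ) * V.det) := by
    rw [← det_mul_column, hentry, det_mul_row, hu, det_permute']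
  rw [mul_left_cancel₀ hP key]
  exact associated_unit_mul_left _ _ ((Equiv.Perm.sign _).isUnit.map (Int.castRingHom _))

theorem prod_associated_det_vandermonde :
    Associated (∏ p ∈ Finset.univ.filter (fun p : Fin r × Fin r => p.1 < p.2),
        ((X p.1 - X p.2) * (X p.1 + X p.2)))
      (vandermonde fun j => (X j ^ 2 : MvPolynomial (Fin r) ℝ)).det := by
  rw [det_vandermonde, Finset.prod_filter, Fintype.prod_prod_type]
  refine Associated.prod _ _ _ fun i _ => ?_
  rw [← Finset.prod_filter, Finset.filter_lt_eq_Ioi]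
  exact Associated.prod _ _ _ fun j _ => ⟨-1, by rw [Units.val_neg, Units.val_one]; ring⟩

end TypeD

theorem Dr_free_with_exponents_general (r : ℕ) :
    FreeWithExp r
      (∏ p ∈ Finset.univ.filter (fun p : Fin r × Fin r => p.1 < p.2),
          ((X p.1 - X p.2) * (X p.1 + X p.2)))
      (Finset.univ.val.map
        (fun k : Fin r => if (k : ℕ) < r - 1 then 2 * (k : ℕ) + 1 else r - 1)) := by
  rw [← prod_linpoly_normalD]
  refine freeWithExp_of_det_derivMatrix_associated _ _ (fun q => prime_linpoly_normalD)
    (fun q hq q' hq' => eq_of_linpoly_normalD_dvd hq hq') (basisD r) _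
    (fun k => (basisD r k).prod_dvd_apply_prod _ _ fun q hq => linpoly_normalD_dvd_basisD k hq)
    basisD_X_mem_homogeneousSubmodule ?_
  rw [prod_linpoly_normalD]
  exact det_derivMatrix_basisD_associated.trans prod_associated_det_vandermonde.symm

/-- The reflection arrangement of type `D_r`, with defining polynomial
`∏_{1≤i<j≤r}(x_i−x_j)(x_i+x_j)`, is free with exponents `{1, 3, 5, …, 2r−3} ∪ {r−1}`. -/
theorem Dr_free_with_exponents (r : ℕ) (hr : 2 ≤ r) :
    FreeWithExp r
      (∏ p ∈ Finset.univ.filter (fun p : Fin r × Fin r => p.1 < p.2),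
          ((X p.1 - X p.2) * (X p.1 + X p.2)))
      (Finset.univ.val.map
        (fun k : Fin r => if (k : ℕ) < r - 1 then 2 * (k : ℕ) + 1 else r - 1)) :=
  Dr_free_with_exponents_general r
end

section
/- For 0 ≤ k ≤ r, the arrangement D_r^k with defining polynomial x₁⋯x_k ∏_{1≤i<j≤r}(x_i−x_j)(x_i+x_j) is inductively free. (In particular D_r^0 is the D_r reflection arrangement and D_r^r is the B_r reflection arrangement.) -/
open Module

/-- `H` is a hyperplane of the ambient subspace `X`. -/
def IsHypIn {n : ℕ} (X H : Submodule ℝ (Fin n → ℝ)) : Prop :=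
  H < X ∧ finrank ℝ H + 1 = finrank ℝ X

/-- the restriction `A^H = {H ∩ K : K ∈ A \ {H}}` of the arrangement `A` to `H`. -/
noncomputable def restrictArr {n : ℕ} (A : Finset (Submodule ℝ (Fin n → ℝ)))
    (H : Submodule ℝ (Fin n → ℝ)) : Finset (Submodule ℝ (Fin n → ℝ)) :=
  letI := Classical.decEq (Submodule ℝ (Fin n → ℝ))
  (A.erase H).image (fun K => H ⊓ K)

/-- Inductive freeness (with exponents) of a central arrangement `A` consisting of
hyperplanes of the ambient subspace `X ≤ ℝ^n`, following Orlik–Terao: the empty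
arrangement of rank `ℓ` is inductively free with exponents `ℓ` zeros, and `A` is
inductively free with exponents `e'' ∪ {d+1}` whenever for some `H ∈ A` the deleted
arrangement `A' = A \ {H}` is inductively free with exponents `e'' ∪ {d}` and the
restriction `A'' = A^H` is inductively free with exponents `e'' ⊆ exp A'`. -/
inductive IndFree {n : ℕ} :
    Submodule ℝ (Fin n → ℝ) → Finset (Submodule ℝ (Fin n → ℝ)) → Multiset ℕ → Prop
  | empty (X : Submodule ℝ (Fin n → ℝ)) :
      IndFree X ∅ (Multiset.replicate (finrank ℝ X) 0)
  | add (X : Submodule ℝ (Fin n → ℝ)) (A : Finset (Submodule ℝ (Fin n → ℝ)))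
      (H : Submodule ℝ (Fin n → ℝ)) (e'' : Multiset ℕ) (d : ℕ)
      (hH : H ∈ A) (hhyp : ∀ K ∈ A, IsHypIn X K)
      (h' : IndFree X (letI := Classical.decEq (Submodule ℝ (Fin n → ℝ)); A.erase H)
        (d ::ₘ e''))
      (h'' : IndFree H (restrictArr A H) e'') :
      IndFree X A ((d + 1) ::ₘ e'')

/-!
Write `V_L = {x | x_t = 0 for t ∉ L}` and, for `Z ⊆ L`, let `D_L^Z` be the arrangement in `V_L`
of the hyperplanes `x_i = ±x_j` (`i ≠ j` in `L`) and `x_i = 0` (`i ∈ Z`), so that `D_r^k` is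
`D_L^Z` for `L = {1, …, r}`, `Z = {1, …, k}`. By strong induction on `L`, `D_L^Z` is inductively
free with exponents `1, 3, …, 2n - 3, n - 1 + |Z|`, where `n = |L|`.

For `Z = ∅` pick `m ∈ L` and let `L' = L \ {m}`. Adjoining the line `ℝ e_m` to `D_{L'}^∅` adds an
exponent `0`. Then add the hyperplanes `x_a = x_m` (`a ∈ L'`) one at a time, and after them the
hyperplanes `x_a = -x_m`. The transvection `x ↦ x + s x_a e_m` maps `V_{L'}` onto
`x_a = s x_m` and identifies the restriction with `D_{L'}^∅` for `s = 1` and with `D_{L'}^{a}`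
for `s = -1`. So the exponents of the restrictions do not change, and at each step one exponent
of the deleted arrangement goes up by one. Finally add the hyperplanes `x_m = 0` (`m ∈ Z`). Each
restriction to such a hyperplane is the type `B` arrangement `D_{L \ m}^{L \ m}`, whose exponents
are `1, 3, …, 2n - 3`.
-/

open Finset

section Modular

variable {α : Type*} [Lattice α] [OrderBot α] [IsModularLattice α] {a b c x : α}

theorem sup_inf_eq_of_le_of_disjoint (ha : a ≤ c) (hcb : Disjoint c b) : (a ⊔ b) ⊓ c = a := by
  rw [sup_inf_assoc_of_le b ha, inf_comm, hcb.eq_bot, sup_bot_eq]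

theorem sup_inf_sup_eq_of_disjoint (ha : a ≤ x) (hb : b ≤ x) (hxc : Disjoint x c) :
    (a ⊔ c) ⊓ (b ⊔ c) = a ⊓ b ⊔ c := by
  calc (a ⊔ c) ⊓ (b ⊔ c) = c ⊔ a ⊓ (b ⊔ c) := by
        rw [sup_comm, sup_inf_assoc_of_le a le_sup_right]
    _ = c ⊔ a ⊓ ((b ⊔ c) ⊓ x) := by rw [inf_comm _ x, ← inf_assoc, inf_eq_left.2 ha]
    _ = a ⊓ b ⊔ c := by rw [sup_inf_eq_of_le_of_disjoint hb hxc, sup_comm]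

end Modular

section IndFree

variable {n : ℕ} {X H K : Submodule ℝ (Fin n → ℝ)} {A : Finset (Submodule ℝ (Fin n → ℝ))}
  {d : ℕ} {e : Multiset ℕ} {v : Fin n → ℝ}

theorem isHypIn_inf_ker {f : (Fin n → ℝ) →ₗ[ℝ] ℝ} {x : Fin n → ℝ} (hx : x ∈ X) (hfx : f x ≠ 0) :
    IsHypIn X (X ⊓ LinearMap.ker f) := by
  have hxK : x ∉ X ⊓ LinearMap.ker f := fun h => hfx h.2
  have hX : X ⊓ LinearMap.ker f ⊔ ℝ ∙ x = X := by
    refine le_antisymm (sup_le inf_le_left ((Submodule.span_singleton_le_iff_mem _ _).2 hx))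
      fun y hy => Submodule.mem_sup.2 ⟨y - (f y / f x) • x, ⟨X.sub_mem hy (X.smul_mem _ hx), ?_⟩,
        (f y / f x) • x, Submodule.smul_mem _ _ (Submodule.mem_span_singleton_self x),
        sub_add_cancel _ _⟩
    simp [hfx]
  refine ⟨lt_of_le_of_ne inf_le_left fun h => hxK (by rwa [h]), ?_⟩
  rw [← Submodule.finrank_sup_span_singleton hxK, hX]

theorem IsHypIn.map (g : (Fin n → ℝ) ≃ₗ[ℝ] (Fin n → ℝ)) (h : IsHypIn X K) :
    IsHypIn (X.map g.toLinearMap) (K.map g.toLinearMap) := by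
  refine ⟨(Submodule.orderIsoMapComap g).strictMono h.1, ?_⟩
  rw [LinearEquiv.finrank_map_eq, LinearEquiv.finrank_map_eq]
  exact h.2

theorem IsHypIn.sup_span_singleton (hv : v ∉ X) (h : IsHypIn X K) :
    IsHypIn (X ⊔ ℝ ∙ v) (K ⊔ ℝ ∙ v) := by
  have hvK : v ∉ K := fun hvK => hv (h.1.le hvK)
  refine ⟨sup_lt_sup_of_lt_of_inf_le_inf h.1 ?_, ?_⟩
  · rw [(Submodule.disjoint_span_singleton_of_notMem hv).eq_bot]
    exact bot_le
  · rw [Submodule.finrank_sup_span_singleton hv, Submodule.finrank_sup_span_singleton hvK, h.2]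

theorem IndFree.of_mem (hH : H ∈ A) (hhyp : ∀ K ∈ A, IsHypIn X K)
    (h' : IndFree X (A.erase H) (d ::ₘ e)) (h'' : IndFree H ((A.erase H).image (H ⊓ ·)) e) :
    IndFree X A ((d + 1) ::ₘ e) :=
  .add X A H e d hH hhyp (by convert h') (by convert h''; rfl)

theorem IndFree.insert_of_notMem (hHA : H ∉ A) (hhyp : ∀ K ∈ insert H A, IsHypIn X K)
    (h' : IndFree X A (d ::ₘ e)) (h'' : IndFree H (A.image (H ⊓ ·)) e) :
    IndFree X (insert H A) ((d + 1) ::ₘ e) :=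
  .of_mem (mem_insert_self H A) hhyp (by rwa [erase_insert hHA]) (by rwa [erase_insert hHA])

theorem IndFree.union_image {ι : Type*} [DecidableEq ι] {F : ι → Submodule ℝ (Fin n → ℝ)}
    (h : IndFree X A (d ::ₘ e)) (T : Finset ι) (hhyp : ∀ K ∈ A ∪ T.image F, IsHypIn X K)
    (hstep : ∀ a ∈ T, ∀ T' ⊆ T, a ∉ T' →
      F a ∉ A ∪ T'.image F ∧ IndFree (F a) ((A ∪ T'.image F).image (F a ⊓ ·)) e) :
    IndFree X (A ∪ T.image F) ((d + T.card) ::ₘ e) := by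
  induction T using Finset.induction_on with
  | empty => simpa using h
  | @insert a T haT ih =>
    have hsub : T ⊆ insert a T := subset_insert a T
    obtain ⟨hnotMem, hres⟩ := hstep a (mem_insert_self a T) T hsub haT
    rw [image_insert, union_insert, card_insert_of_notMem haT, ← add_assoc]
    refine .insert_of_notMem hnotMem ?_ (ih ?_ ?_) hres
    · rwa [← union_insert, ← image_insert]
    · exact fun K hK => hhyp K (union_subset_union_right (image_subset_image hsub) hK)
    · exact fun b hb T' hT' => hstep b (hsub hb) T' (hT'.trans hsub)

theorem IndFree.map (g : (Fin n → ℝ) ≃ₗ[ℝ] (Fin n → ℝ)) (h : IndFree X A e) :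
    IndFree (X.map g.toLinearMap) (A.image (·.map g.toLinearMap)) e := by
  induction h with
  | empty X => simpa [LinearEquiv.finrank_map_eq] using IndFree.empty (X.map g.toLinearMap)
  | add X A H e d hH hhyp _ _ ih' ih'' =>
    have hinj : Function.Injective fun K : Submodule ℝ (Fin n → ℝ) => K.map g.toLinearMap :=
      Submodule.map_injective_of_injective g.injective
    refine .of_mem (mem_image_of_mem _ hH) ?_ ?_ ?_
    · simp only [mem_image, forall_exists_index, and_imp, forall_apply_eq_imp_iff₂]
      exact fun K hK => (hhyp K hK).map g
    · rw [← image_erase hinj]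
      convert ih'
    · rw [← image_erase hinj, image_image]
      convert ih'' using 1
      simp only [restrictArr, image_image]
      refine image_congr fun K _ => ?_
      exact Submodule.map_inf _ g.injective |>.symm

theorem IndFree.sup_span_singleton (h : IndFree X A e) (hv : v ∉ X) :
    IndFree (X ⊔ ℝ ∙ v) (A.image (· ⊔ ℝ ∙ v)) (0 ::ₘ e) := by
  induction h with
  | empty X =>
    rw [image_empty, ← Multiset.replicate_succ, ← Submodule.finrank_sup_span_singleton hv]
    exact .empty _
  | add X A H e d hH hhyp _ _ ih' ih'' =>
    have hdisj := Submodule.disjoint_span_singleton_of_notMem hv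
    have hle : ∀ K ∈ A, K ≤ X := fun K hK => (hhyp K hK).1.le
    have hinj : Set.InjOn (· ⊔ ℝ ∙ v) (A : Set (Submodule ℝ (Fin n → ℝ))) :=
      fun K hK K' hK' hKK' => by
        rw [← sup_inf_eq_of_le_of_disjoint (hle K hK) hdisj,
          ← sup_inf_eq_of_le_of_disjoint (hle K' hK') hdisj]
        exact congrArg (· ⊓ X) hKK'
    have herase : (A.image (· ⊔ ℝ ∙ v)).erase (H ⊔ ℝ ∙ v) = (A.erase H).image (· ⊔ ℝ ∙ v) := by
      rw [erase_eq, erase_eq, image_sdiff_of_injOn hinj (singleton_subset_iff.2 hH),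
        image_singleton]
    rw [Multiset.cons_swap]
    refine .of_mem (mem_image_of_mem _ hH) ?_ ?_ ?_
    · simp only [mem_image, forall_exists_index, and_imp, forall_apply_eq_imp_iff₂]
      exact fun K hK => (hhyp K hK).sup_span_singleton hv
    · rw [herase, Multiset.cons_swap]
      convert ih' hv
    · rw [herase, image_image]
      convert ih'' fun hvH => hv (hle H hH hvH) using 1
      simp only [restrictArr, image_image]
      refine image_congr fun K hK => ?_
      exact (sup_inf_sup_eq_of_disjoint (hle H hH) (hle K (mem_of_mem_erase hK)) hdisj)

end IndFree

namespace TypeD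

variable {r n : ℕ} {L L' P Z Z' T S : Finset (Fin r)} {f g : (Fin r → ℝ) →ₗ[ℝ] ℝ}
  {i j a m : Fin r} {s s' c : ℝ} {x : Fin r → ℝ} {K : Submodule ℝ (Fin r → ℝ)}

def coordSubspace (L : Finset (Fin r)) : Submodule ℝ (Fin r → ℝ) :=
  Submodule.pi (↑L)ᶜ fun _ => ⊥

def hyp (L : Finset (Fin r)) (f : (Fin r → ℝ) →ₗ[ℝ] ℝ) : Submodule ℝ (Fin r → ℝ) :=
  coordSubspace L ⊓ LinearMap.ker f

def root (i j : Fin r) (s : ℝ) : (Fin r → ℝ) →ₗ[ℝ] ℝ :=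
  LinearMap.proj i - s • LinearMap.proj j

/-- The hyperplanes `x_i = ±x_j` (`i ≠ j ∈ P`) and `x_i = 0` (`i ∈ Z`) inside `coordSubspace L`,
where `L ⊇ P` may be larger. -/
noncomputable def arrD (P Z L : Finset (Fin r)) : Finset (Submodule ℝ (Fin r → ℝ)) :=
  (P.offDiag.image fun p => hyp L (root p.1 p.2 1)) ∪
    (P.offDiag.image fun p => hyp L (root p.1 p.2 (-1))) ∪ Z.image fun i => hyp L (.proj i)

@[simp]
theorem mem_coordSubspace : x ∈ coordSubspace L ↔ ∀ t ∉ L, x t = 0 := by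
  simp [coordSubspace, Submodule.mem_pi]

theorem mem_hyp : x ∈ hyp L f ↔ x ∈ coordSubspace L ∧ f x = 0 := Iff.rfl

@[simp]
theorem root_apply : root i j s x = x i - s * x j := by
  simp [root]

theorem coordSubspace_univ : coordSubspace (univ : Finset (Fin r)) = ⊤ := by
  ext; simp

theorem coordSubspace_empty : coordSubspace (∅ : Finset (Fin r)) = ⊥ := by
  ext x; simp [funext_iff]

theorem coordSubspace_mono (h : L' ⊆ L) : coordSubspace L' ≤ coordSubspace L :=
  fun _ hx t ht => (mem_coordSubspace.1 hx) t fun htL => ht (h htL)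

theorem single_mem_coordSubspace (hi : i ∈ L) : Pi.single i 1 ∈ coordSubspace L := by
  simp only [mem_coordSubspace]
  intro t ht
  simp [show t ≠ i from fun h => ht (h ▸ hi)]

theorem single_notMem_coordSubspace (hi : i ∉ L) : Pi.single i 1 ∉ coordSubspace L := by
  simpa using ⟨i, hi, by simp⟩

theorem coordSubspace_insert (m : Fin r) (L : Finset (Fin r)) :
    coordSubspace (insert m L) = coordSubspace L ⊔ ℝ ∙ Pi.single m 1 := by
  refine le_antisymm (fun x hx => Submodule.mem_sup.2 ⟨x - x m • Pi.single m 1, ?_,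
    x m • Pi.single m 1, Submodule.smul_mem _ _ (Submodule.mem_span_singleton_self _),
    sub_add_cancel _ _⟩) (sup_le (coordSubspace_mono (subset_insert m L)) ?_)
  · simp only [mem_coordSubspace, mem_insert, not_or] at hx ⊢
    intro t ht
    by_cases htm : t = m
    · simp [htm]
    · simp [htm, hx t ⟨htm, ht⟩]
  · exact (Submodule.span_singleton_le_iff_mem _ _).2
      (single_mem_coordSubspace (mem_insert_self m L))

theorem hyp_le_coordSubspace : hyp L f ≤ coordSubspace L := inf_le_left

theorem inf_hyp_of_le {H : Submodule ℝ (Fin r → ℝ)} (hH : H ≤ coordSubspace L) :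
    H ⊓ hyp L f = H ⊓ LinearMap.ker f := by
  rw [hyp, ← inf_assoc, inf_eq_left.2 hH]

theorem coordSubspace_inf_hyp (h : L' ⊆ L) : coordSubspace L' ⊓ hyp L f = hyp L' f := by
  rw [hyp, ← inf_assoc, inf_eq_left.2 (coordSubspace_mono h), hyp]

theorem hyp_insert (hf : f (Pi.single m 1) = 0) :
    hyp (insert m L) f = hyp L f ⊔ ℝ ∙ Pi.single m 1 := by
  have hle : ℝ ∙ Pi.single m 1 ≤ LinearMap.ker f :=
    (Submodule.span_singleton_le_iff_mem _ _).2 hf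
  rw [hyp, hyp, coordSubspace_insert, sup_comm, sup_inf_assoc_of_le _ hle, sup_comm]

theorem inf_hyp_congr {H : Submodule ℝ (Fin r → ℝ)} (hfg : ∀ x ∈ H, f x = 0 ↔ g x = 0) :
    H ⊓ hyp L f = H ⊓ hyp L g := by
  ext x
  simp only [Submodule.mem_inf, mem_hyp]
  exact ⟨fun ⟨hx, hL, hf⟩ => ⟨hx, hL, (hfg x hx).1 hf⟩,
    fun ⟨hx, hL, hg⟩ => ⟨hx, hL, (hfg x hx).2 hg⟩⟩

theorem hyp_congr (hfg : ∀ x ∈ coordSubspace L, f x = 0 ↔ g x = 0) : hyp L f = hyp L g := by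
  simpa [hyp, ← inf_assoc] using inf_hyp_congr (L := L) hfg

theorem hyp_root_comm (hs : s * s = 1) : hyp L (root i j s) = hyp L (root j i s) :=
  hyp_congr fun x _ => by
    simp only [root_apply]
    constructor
    · intro h; linear_combination (-s) * h - x j * hs
    · intro h; linear_combination (-s) * h - x i * hs

theorem hyp_root_self_neg_one : hyp L (root i i (-1)) = hyp L (.proj i) :=
  hyp_congr fun x _ => by simp

theorem isHypIn_hyp (hi : i ∈ L) (hf : f (Pi.single i 1) ≠ 0) :
    IsHypIn (coordSubspace L) (hyp L f) :=
  isHypIn_inf_ker (single_mem_coordSubspace hi) hf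

theorem hyp_insert_proj_self (hm : m ∉ L') :
    hyp (insert m L') (.proj m) = coordSubspace L' := by
  ext x
  simp only [mem_hyp, mem_coordSubspace, mem_insert, not_or, LinearMap.proj_apply]
  constructor
  · rintro ⟨h, hxm⟩ t ht
    by_cases htm : t = m
    · exact htm ▸ hxm
    · exact h t ⟨htm, ht⟩
  · exact fun h => ⟨fun t ht => h t ht.2, h m hm⟩

theorem mem_arrD : K ∈ arrD P Z L ↔ (∃ i ∈ P, ∃ j ∈ P, i ≠ j ∧
      (K = hyp L (root i j 1) ∨ K = hyp L (root i j (-1)))) ∨ ∃ i ∈ Z, K = hyp L (.proj i) := by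
  simp only [arrD, mem_union, mem_image, mem_offDiag, Prod.exists]
  constructor
  · rintro ((⟨i, j, ⟨hi, hj, hij⟩, rfl⟩ | ⟨i, j, ⟨hi, hj, hij⟩, rfl⟩) | ⟨i, hi, rfl⟩)
    · exact .inl ⟨i, hi, j, hj, hij, .inl rfl⟩
    · exact .inl ⟨i, hi, j, hj, hij, .inr rfl⟩
    · exact .inr ⟨i, hi, rfl⟩
  · rintro (⟨i, hi, j, hj, hij, rfl | rfl⟩ | ⟨i, hi, rfl⟩)
    · exact .inl (.inl ⟨i, j, ⟨hi, hj, hij⟩, rfl⟩)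
    · exact .inl (.inr ⟨i, j, ⟨hi, hj, hij⟩, rfl⟩)
    · exact .inr ⟨i, hi, rfl⟩

theorem isHypIn_of_mem_arrD (hP : P ⊆ L) (hZ : Z ⊆ L) (hK : K ∈ arrD P Z L) :
    IsHypIn (coordSubspace L) K := by
  simp only [arrD, mem_union, mem_image, mem_offDiag] at hK
  rcases hK with (⟨p, ⟨hp₁, -, hp⟩, rfl⟩ | ⟨p, ⟨hp₁, -, hp⟩, rfl⟩) | ⟨i, hi, rfl⟩
  · exact isHypIn_hyp (hP hp₁) (by simp [Ne.symm hp])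
  · exact isHypIn_hyp (hP hp₁) (by simp [Ne.symm hp])
  · exact isHypIn_hyp (hZ hi) (by simp)

theorem arrD_union_image_proj :
    arrD P Z L ∪ Z'.image (fun i => hyp L (.proj i)) = arrD P (Z ∪ Z') L := by
  simp [arrD, image_union, union_assoc]

theorem arrD_insert (hmP : m ∉ P) :
    arrD (insert m P) Z L = arrD P Z L ∪ P.image (fun i => hyp L (root i m 1)) ∪
      P.image (fun i => hyp L (root i m (-1))) := by
  have h₁ : ∀ i, hyp L (root m i 1) = hyp L (root i m 1) := fun i => hyp_root_comm (by norm_num)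
  have h₂ : ∀ i, hyp L (root m i (-1)) = hyp L (root i m (-1)) :=
    fun i => hyp_root_comm (by norm_num)
  simp only [arrD, offDiag_insert hmP, image_union, singleton_product, product_singleton,
    map_eq_image, image_image, Function.comp_def, Function.Embedding.coeFn_mk, h₁, h₂]
  ext K
  simp only [mem_union]
  tauto

theorem image_arrD {L₁ L₂ : Finset (Fin r)}
    (φ ψ : Submodule ℝ (Fin r → ℝ) → Submodule ℝ (Fin r → ℝ)) (hmP : m ∉ P) (hmZ : m ∉ Z)
    (h : ∀ f : (Fin r → ℝ) →ₗ[ℝ] ℝ, f (Pi.single m 1) = 0 → φ (hyp L₁ f) = ψ (hyp L₂ f)) :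
    (arrD P Z L₁).image φ = (arrD P Z L₂).image ψ := by
  have hne : ∀ i ∈ P, i ≠ m := fun i hi him => hmP (him ▸ hi)
  simp only [arrD, image_union, image_image]
  refine congrArg₂ (· ∪ ·) (congrArg₂ (· ∪ ·) ?_ ?_) ?_ <;> refine image_congr fun p hp => h _ ?_
  · rw [mem_coe, mem_offDiag] at hp
    simp [hne _ hp.1, hne _ hp.2.1]
  · rw [mem_coe, mem_offDiag] at hp
    simp [hne _ hp.1, hne _ hp.2.1]
  · simp [show p ≠ m from fun h => hmZ (h ▸ hp)]

noncomputable def shear (ham : a ≠ m) (s : ℝ) : (Fin r → ℝ) ≃ₗ[ℝ] (Fin r → ℝ) :=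
  LinearEquiv.transvection (f := s • LinearMap.proj a) (v := Pi.single m 1) (by simp [ham])

theorem shear_symm_apply (ham : a ≠ m) (y : Fin r → ℝ) :
    (shear ham s).symm y = y - (s * y a) • Pi.single m 1 := by
  rw [LinearEquiv.symm_apply_eq]
  simp [shear, LinearMap.transvection.apply, ham]

theorem map_shear_ker (ham : a ≠ m) (hf : f (Pi.single m 1) = 0) :
    (LinearMap.ker f).map (shear ham s).toLinearMap = LinearMap.ker f := by
  ext y
  simp [Submodule.mem_map_equiv, shear_symm_apply, hf]

theorem map_shear_coordSubspace (hm : m ∉ L') (ham : a ≠ m) (hs : s * s = 1) :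
    (coordSubspace L').map (shear ham s).toLinearMap = hyp (insert m L') (root a m s) := by
  ext y
  simp only [Submodule.mem_map_equiv, shear_symm_apply, mem_hyp, mem_coordSubspace, mem_insert,
    not_or, root_apply, Pi.sub_apply, Pi.smul_apply, Pi.single_apply, smul_eq_mul]
  constructor
  · intro h
    have hym : y m = s * y a := by simpa [sub_eq_zero] using h m hm
    refine ⟨fun t ⟨htm, ht⟩ => by simpa [htm] using h t ht, ?_⟩
    rw [hym, ← mul_assoc, hs, one_mul, sub_self]
  · rintro ⟨h, hya⟩ t ht
    by_cases htm : t = m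
    · subst htm
      rw [if_pos rfl, sub_eq_zero.1 hya]
      linear_combination (-(y t)) * hs
    · simp [htm, h t ⟨htm, ht⟩]

theorem map_shear_hyp (hm : m ∉ L') (ham : a ≠ m) (hs : s * s = 1)
    (hf : f (Pi.single m 1) = 0) :
    (hyp L' f).map (shear ham s).toLinearMap =
      hyp (insert m L') (root a m s) ⊓ hyp (insert m L') f := by
  rw [hyp, Submodule.map_inf _ (shear ham s).injective, map_shear_coordSubspace hm ham hs,
    map_shear_ker ham hf, inf_hyp_of_le hyp_le_coordSubspace]

theorem inf_hyp_root_edge (hi : i ∈ L') (hm : m ∉ L') (ham : a ≠ m) (hs : s * s = 1) (s' : ℝ) :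
    hyp (insert m L') (root a m s) ⊓ hyp (insert m L') (root i m s') =
      (hyp L' (root i a (s' * s))).map (shear ham s).toLinearMap := by
  have him : i ≠ m := fun h => hm (h ▸ hi)
  rw [map_shear_hyp hm ham hs (by simp [him, ham])]
  refine inf_hyp_congr fun x hx => ?_
  have hxm : x m = s * x a := by
    have := (mem_hyp.1 hx).2
    rw [root_apply] at this
    linear_combination (-s) * this - x m * hs
  simp [hxm, mul_assoc]

theorem image_inf_edges (hT : T ⊆ L') (hm : m ∉ L') (ham : a ≠ m) (hs : s * s = 1) (s' : ℝ) :
    (T.image fun i => hyp (insert m L') (root i m s')).image (hyp (insert m L') (root a m s) ⊓ ·) =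
      (T.image fun i => hyp L' (root i a (s' * s))).image (·.map (shear ham s).toLinearMap) := by
  simp only [image_image]
  exact image_congr fun i hi => inf_hyp_root_edge (hT hi) hm ham hs s'

theorem image_inf_arrD (hm : m ∉ L') (ham : a ≠ m) (hs : s * s = 1) (hZ : Z ⊆ L') :
    (arrD L' Z (insert m L')).image (hyp (insert m L') (root a m s) ⊓ ·) =
      (arrD L' Z L').image (·.map (shear ham s).toLinearMap) :=
  image_arrD _ _ hm (fun h => hm (hZ h)) fun _ hf => (map_shear_hyp hm ham hs hf).symm

theorem restriction_plus (ha : a ∈ L') (hm : m ∉ L') (ham : a ≠ m) (hT : T ⊆ L') (haT : a ∉ T) :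
    (arrD L' ∅ (insert m L') ∪ T.image fun i => hyp (insert m L') (root i m 1)).image
        (hyp (insert m L') (root a m 1) ⊓ ·) =
      (arrD L' ∅ L').image (·.map (shear ham 1).toLinearMap) := by
  rw [image_union, image_inf_arrD hm ham (by norm_num) (empty_subset _),
    image_inf_edges hT hm ham (by norm_num), ← image_union, union_eq_left.2]
  intro K hK
  obtain ⟨i, hi, rfl⟩ := mem_image.1 hK
  exact mem_arrD.2 (.inl ⟨i, hT hi, a, ha, fun h => haT (h ▸ hi), .inl (by norm_num)⟩)

theorem restriction_minus (ha : a ∈ L') (hm : m ∉ L') (ham : a ≠ m) (hS : S ⊆ L') (haS : a ∉ S) :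
    (arrD L' ∅ (insert m L') ∪ (L'.image fun i => hyp (insert m L') (root i m 1)) ∪
        S.image fun i => hyp (insert m L') (root i m (-1))).image
        (hyp (insert m L') (root a m (-1)) ⊓ ·) =
      (arrD L' {a} L').image (·.map (shear ham (-1)).toLinearMap) := by
  rw [image_union, image_union, image_inf_arrD hm ham (by norm_num) (empty_subset _),
    image_inf_edges subset_rfl hm ham (by norm_num), image_inf_edges hS hm ham (by norm_num),
    ← image_union, ← image_union]
  congr 1
  ext K
  simp only [mem_union, mem_image, mem_arrD, mem_singleton, notMem_empty, false_and,
    exists_false, or_false, exists_eq_left]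
  constructor
  · rintro ((h | ⟨i, hi, rfl⟩) | ⟨i, hi, rfl⟩)
    · exact .inl h
    · rcases eq_or_ne i a with rfl | hia
      · exact .inr (by norm_num [hyp_root_self_neg_one])
      · exact .inl ⟨i, hi, a, ha, hia, .inr (by norm_num)⟩
    · exact .inl ⟨i, hS hi, a, ha, fun h => haS (h ▸ hi), .inl (by norm_num)⟩
  · rintro (h | rfl)
    · exact .inl (.inl h)
    · exact .inl (.inr ⟨a, ha, by norm_num [hyp_root_self_neg_one]⟩)

theorem restriction_zero (hm : m ∉ L') (hZ : Z ⊆ L') :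
    (arrD (insert m L') Z (insert m L')).image (hyp (insert m L') (.proj m) ⊓ ·) =
      arrD L' L' L' := by
  have hedge : ∀ s : ℝ, (L'.image fun i => hyp (insert m L') (root i m s)).image
      (coordSubspace L' ⊓ ·) = L'.image fun i => hyp L' (.proj i) := fun s => by
    simp only [image_image]
    refine image_congr fun i _ => ?_
    simp only [Function.comp_apply, coordSubspace_inf_hyp (subset_insert m L')]
    exact hyp_congr fun x hx => by simp [(mem_coordSubspace.1 hx) m hm]
  rw [hyp_insert_proj_self hm, arrD_insert hm, image_union, image_union, hedge, hedge,
    image_arrD _ id hm (fun h => hm (hZ h)) fun _ _ => coordSubspace_inf_hyp (subset_insert m L'),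
    image_id, arrD_union_image_proj, arrD_union_image_proj, union_assoc, union_self,
    union_eq_right.2 hZ]

/-- Its coordinates on `L'` are distinct and positive, so it lies on no hyperplane of
`arrD L' Z _`. The value `c` puts it on exactly one hyperplane `x_a = ±x_m`. -/
def witness (L' : Finset (Fin r)) (m : Fin r) (c : ℝ) : Fin r → ℝ :=
  fun t => if t = m then c else if t ∈ L' then (t : ℕ) + 1 else 0

theorem witness_mem_coordSubspace : witness L' m c ∈ coordSubspace (insert m L') := by
  simp only [mem_coordSubspace, mem_insert, not_or]
  rintro t ⟨htm, ht⟩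
  simp [witness, htm, ht]

theorem witness_apply_of_mem (hm : m ∉ L') (hi : i ∈ L') : witness L' m c i = (i : ℕ) + 1 := by
  simp [witness, hi, show i ≠ m from fun h => hm (h ▸ hi)]

theorem witness_apply_self : witness L' m c m = c := if_pos rfl

theorem witness_mem_hyp_root_iff (hm : m ∉ L') (hi : i ∈ L') :
    witness L' m c ∈ hyp (insert m L') (root i m s) ↔ ((i : ℕ) : ℝ) + 1 = s * c := by
  rw [mem_hyp, root_apply, witness_apply_of_mem hm hi, witness_apply_self, sub_eq_zero]
  exact and_iff_right witness_mem_coordSubspace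

theorem witness_mem_hyp_root_iff_of_sign (hm : m ∉ L') (hi : i ∈ L')
    (hs : s = 1 ∨ s = -1) (hs' : s' = 1 ∨ s' = -1) :
    witness L' m (s * ((a : ℕ) + 1)) ∈ hyp (insert m L') (root i m s') ↔ i = a ∧ s' = s := by
  rw [witness_mem_hyp_root_iff hm hi, ← Fin.val_inj]
  have := (i : ℕ).cast_nonneg (α := ℝ)
  have := (a : ℕ).cast_nonneg (α := ℝ)
  rcases hs with rfl | rfl <;> rcases hs' with rfl | rfl <;> norm_num <;> intro h <;> linarith

theorem witness_notMem_of_mem_arrD (hm : m ∉ L') (hZ : Z ⊆ L') (hK : K ∈ arrD L' Z L) :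
    witness L' m c ∉ K := by
  simp only [arrD, mem_union, mem_image, mem_offDiag, Prod.exists] at hK
  intro hw
  rcases hK with (⟨i, j, ⟨hi, hj, hij⟩, rfl⟩ | ⟨i, j, ⟨hi, hj, -⟩, rfl⟩) | ⟨i, hi, rfl⟩ <;>
    have h := (mem_hyp.1 hw).2
  · rw [root_apply, witness_apply_of_mem hm hi, witness_apply_of_mem hm hj] at h
    exact hij (Fin.ext (by exact_mod_cast (by linarith : ((i : ℕ) : ℝ) = (j : ℕ))))
  · rw [root_apply, witness_apply_of_mem hm hi, witness_apply_of_mem hm hj] at h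
    linarith [(i : ℕ).cast_nonneg (α := ℝ), (j : ℕ).cast_nonneg (α := ℝ)]
  · rw [LinearMap.proj_apply, witness_apply_of_mem hm (hZ hi)] at h
    linarith [(i : ℕ).cast_nonneg (α := ℝ)]

theorem hyp_root_notMem_plus (ha : a ∈ L') (hm : m ∉ L') (hT : T ⊆ L') (haT : a ∉ T) :
    hyp (insert m L') (root a m 1) ∉
      arrD L' ∅ (insert m L') ∪ T.image fun i => hyp (insert m L') (root i m 1) := by
  have hw := (witness_mem_hyp_root_iff_of_sign hm ha (.inl rfl) (.inl rfl)).2 ⟨rfl, rfl⟩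
  rw [mem_union, mem_image]
  rintro (h | ⟨i, hi, hia⟩)
  · exact witness_notMem_of_mem_arrD hm (empty_subset _) h hw
  · rw [← hia, witness_mem_hyp_root_iff_of_sign hm (hT hi) (.inl rfl) (.inl rfl)] at hw
    exact haT (hw.1 ▸ hi)

theorem hyp_root_notMem_minus (ha : a ∈ L') (hm : m ∉ L') (hS : S ⊆ L') (haS : a ∉ S) :
    hyp (insert m L') (root a m (-1)) ∉
      arrD L' ∅ (insert m L') ∪ (L'.image fun i => hyp (insert m L') (root i m 1)) ∪
        S.image fun i => hyp (insert m L') (root i m (-1)) := by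
  have hw := (witness_mem_hyp_root_iff_of_sign hm ha (.inr rfl) (.inr rfl)).2 ⟨rfl, rfl⟩
  rw [mem_union, mem_union, mem_image, mem_image]
  rintro ((h | ⟨i, hi, hia⟩) | ⟨i, hi, hia⟩)
  · exact witness_notMem_of_mem_arrD hm (empty_subset _) h hw
  · rw [← hia, witness_mem_hyp_root_iff_of_sign hm hi (.inr rfl) (.inl rfl)] at hw
    norm_num at hw
  · rw [← hia, witness_mem_hyp_root_iff_of_sign hm (hS hi) (.inr rfl) (.inr rfl)] at hw
    exact haS (hw.1 ▸ hi)

theorem hyp_proj_notMem_arrD (hm : m ∉ L') (hZ : Z ⊆ L') :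
    hyp (insert m L') (.proj m) ∉ arrD (insert m L') Z (insert m L') := by
  have hw : witness L' m 0 ∈ hyp (insert m L') (.proj m) :=
    mem_hyp.2 ⟨witness_mem_coordSubspace, witness_apply_self⟩
  rw [arrD_insert hm, mem_union, mem_union, mem_image, mem_image]
  rintro ((h | ⟨i, hi, hia⟩) | ⟨i, hi, hia⟩)
  · exact witness_notMem_of_mem_arrD hm hZ h hw
  all_goals
    rw [← hia, witness_mem_hyp_root_iff hm hi, mul_zero] at hw
    linarith [(i : ℕ).cast_nonneg (α := ℝ)]

/-- `exps n z = {1, 3, …, 2n - 3, n - 1 + z}` are the exponents of `D_n^z`. -/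
def exps : ℕ → ℕ → Multiset ℕ
  | 0, _ => 0
  | n + 1, z => (n + z) ::ₘ (Multiset.range n).map fun i => 2 * i + 1

theorem exps_self (n : ℕ) : exps n n = (Multiset.range n).map fun i => 2 * i + 1 := by
  cases n with
  | zero => rfl
  | succ n => rw [exps, Multiset.range_succ, Multiset.map_cons]; congr 1; ring

theorem exps_succ (n z : ℕ) : exps (n + 1) z = (n + z) ::ₘ exps n n := by
  rw [exps_self, exps]

/-- `n - 1` is truncated subtraction: when `n = 0` both sides are `{0}`. -/
theorem cons_exps_zero (n : ℕ) : n ::ₘ exps n 0 = (n - 1) ::ₘ exps n 1 := by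
  cases n with
  | zero => rfl
  | succ n => simp only [exps, Multiset.cons_swap (n + 1)]; rfl

theorem exps_succ_zero (n : ℕ) : exps (n + 1) 0 = (n - 1 + n) ::ₘ exps n 1 := by
  cases n with
  | zero => rfl
  | succ n =>
    simp only [exps, Multiset.range_succ, Multiset.map_cons]
    rw [show n + 1 - 1 + (n + 1) = 2 * n + 1 by omega, add_zero, Multiset.cons_swap]

theorem indFree_arrD_insert_empty (hm : m ∉ L')
    (ih : ∀ Z ⊆ L', IndFree (coordSubspace L') (arrD L' Z L') (exps L'.card Z.card)) :
    IndFree (coordSubspace (insert m L')) (arrD (insert m L') ∅ (insert m L'))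
      (exps (L'.card + 1) 0) := by
  have hne : ∀ a ∈ L', a ≠ m := fun a ha h => hm (h ▸ ha)
  have hhyp : ∀ K ∈ arrD (insert m L') ∅ (insert m L'),
      IsHypIn (coordSubspace (insert m L')) K :=
    fun K => isHypIn_of_mem_arrD subset_rfl (empty_subset _)
  have hlift : IndFree (coordSubspace (insert m L')) (arrD L' ∅ (insert m L'))
      (0 ::ₘ exps L'.card 0) := by
    have := (ih ∅ (empty_subset _)).sup_span_singleton (single_notMem_coordSubspace hm)
    rwa [← coordSubspace_insert, image_arrD _ id hm (notMem_empty m)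
      fun f hf => (hyp_insert hf).symm, image_id] at this
  have hplus := hlift.union_image L'
    (fun K hK => hhyp K (by rw [arrD_insert hm]; exact subset_union_left hK))
    fun a ha T hT haT => ⟨hyp_root_notMem_plus ha hm hT haT, by
      rw [restriction_plus ha hm (hne a ha) hT haT,
        ← map_shear_coordSubspace hm (hne a ha) (by norm_num)]
      exact (ih ∅ (empty_subset _)).map _⟩
  rw [zero_add, cons_exps_zero] at hplus
  have hminus := hplus.union_image L' (fun K hK => hhyp K (by rwa [arrD_insert hm]))
    fun a ha S hS haS => ⟨hyp_root_notMem_minus ha hm hS haS, by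
      rw [restriction_minus ha hm (hne a ha) hS haS,
        ← map_shear_coordSubspace hm (hne a ha) (by norm_num)]
      exact (ih {a} (singleton_subset_iff.2 ha)).map _⟩
  rwa [arrD_insert hm, exps_succ_zero]

theorem indFree_arrD_of_empty
    (hD : IndFree (coordSubspace L) (arrD L ∅ L) (exps (n + 1) 0))
    (hB : ∀ m ∈ L, IndFree (coordSubspace (L.erase m)) (arrD (L.erase m) (L.erase m) (L.erase m))
      (exps n n))
    (hZ : Z ⊆ L) : IndFree (coordSubspace L) (arrD L Z L) (exps (n + 1) Z.card) := by
  rw [exps_succ, add_zero] at hD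
  rw [exps_succ, ← empty_union Z, ← arrD_union_image_proj, empty_union]
  refine hD.union_image Z (fun K hK => isHypIn_of_mem_arrD subset_rfl hZ ?_)
    fun m hm Z' hZ' hmZ' => ?_
  · rwa [arrD_union_image_proj, empty_union] at hK
  have hZ'L : Z' ⊆ L.erase m := fun i hi => mem_erase.2 ⟨fun h => hmZ' (h ▸ hi), hZ (hZ' hi)⟩
  rw [arrD_union_image_proj, empty_union, ← insert_erase (hZ hm)]
  exact ⟨hyp_proj_notMem_arrD (notMem_erase m L) hZ'L, by
    rw [restriction_zero (notMem_erase m L) hZ'L, hyp_insert_proj_self (notMem_erase m L)]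
    exact hB m (hZ hm)⟩

theorem indFree_arrD (L : Finset (Fin r)) :
    ∀ Z ⊆ L, IndFree (coordSubspace L) (arrD L Z L) (exps L.card Z.card) := by
  induction L using Finset.strongInduction with
  | H L ih =>
    intro Z hZ
    rcases L.eq_empty_or_nonempty with rfl | ⟨m, hm⟩
    · rw [subset_empty.1 hZ]
      simpa [arrD, coordSubspace_empty, exps] using IndFree.empty (⊥ : Submodule ℝ (Fin r → ℝ))
    have hD := indFree_arrD_insert_empty (notMem_erase m L) (ih _ (erase_ssubset hm))
    rw [insert_erase hm] at hD
    rw [← card_erase_add_one hm]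
    refine indFree_arrD_of_empty hD (fun a ha => ?_) hZ
    have hcard : (L.erase a).card = (L.erase m).card := by
      rw [card_erase_of_mem ha, card_erase_of_mem hm]
    simpa only [hcard] using ih _ (erase_ssubset ha) _ subset_rfl

theorem mem_arrD_univ {k : ℕ} {K : Submodule ℝ (Fin r → ℝ)} :
    K ∈ arrD univ (univ.filter fun i : Fin r => (i : ℕ) < k) univ ↔
      (∃ i j : Fin r, i < j ∧
        (K = LinearMap.ker ((LinearMap.proj i : (Fin r → ℝ) →ₗ[ℝ] ℝ) - LinearMap.proj j) ∨
         K = LinearMap.ker ((LinearMap.proj i : (Fin r → ℝ) →ₗ[ℝ] ℝ) + LinearMap.proj j))) ∨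
      ∃ i : Fin r, (i : ℕ) < k ∧ K = LinearMap.ker (LinearMap.proj i : (Fin r → ℝ) →ₗ[ℝ] ℝ) := by
  have hyp_univ : ∀ f, hyp (univ : Finset (Fin r)) f = LinearMap.ker f := fun f => by
    rw [hyp, coordSubspace_univ, top_inf_eq]
  have hplus : ∀ i j : Fin r,
      root i j 1 = (LinearMap.proj i : (Fin r → ℝ) →ₗ[ℝ] ℝ) - LinearMap.proj j := fun i j => by
    rw [root, one_smul]
  have hminus : ∀ i j : Fin r,
      root i j (-1) = (LinearMap.proj i : (Fin r → ℝ) →ₗ[ℝ] ℝ) + LinearMap.proj j :=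
    fun i j => LinearMap.ext fun x => by simp
  have hcomm : ∀ (i j : Fin r), (K = hyp univ (root i j 1) ∨ K = hyp univ (root i j (-1))) ↔
      (K = hyp univ (root j i 1) ∨ K = hyp univ (root j i (-1))) := fun i j => by
    rw [hyp_root_comm (by norm_num : (1 : ℝ) * 1 = 1),
      hyp_root_comm (by norm_num : (-1 : ℝ) * -1 = 1)]
  simp only [mem_arrD, mem_univ, mem_filter, true_and, ← hplus, ← hminus, ← hyp_univ]
  refine or_congr_left ⟨fun ⟨i, j, hij, h⟩ => ?_, fun ⟨i, j, hij, h⟩ => ⟨i, j, hij.ne, h⟩⟩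
  rcases hij.lt_or_gt with hlt | hlt
  · exact ⟨i, j, hlt, h⟩
  · exact ⟨j, i, hlt, (hcomm i j).1 h⟩

end TypeD

theorem Drk_inductively_free_general (r k : ℕ)
    (A : Finset (Submodule ℝ (Fin r → ℝ)))
    (hA : ∀ H, H ∈ A ↔
      (∃ i j : Fin r, i < j ∧
        (H = LinearMap.ker ((LinearMap.proj i : (Fin r → ℝ) →ₗ[ℝ] ℝ) - LinearMap.proj j) ∨
         H = LinearMap.ker ((LinearMap.proj i : (Fin r → ℝ) →ₗ[ℝ] ℝ) + LinearMap.proj j))) ∨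
      (∃ i : Fin r, (i : ℕ) < k ∧
        H = LinearMap.ker (LinearMap.proj i : (Fin r → ℝ) →ₗ[ℝ] ℝ))) :
    ∃ e : Multiset ℕ, IndFree ⊤ A e := by
  have hA' : A = TypeD.arrD univ (univ.filter fun i : Fin r => (i : ℕ) < k) univ :=
    Finset.ext fun K => (hA K).trans TypeD.mem_arrD_univ.symm
  rw [hA', ← TypeD.coordSubspace_univ]
  exact ⟨_, TypeD.indFree_arrD _ _ (subset_univ _)⟩

/-- For `0 ≤ k ≤ r`, the arrangement `D_r^k` in `ℝ^r`, consisting of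
the hyperplanes `x_i = ±x_j` (`1 ≤ i < j ≤ r`) and `x_i = 0` (`1 ≤ i ≤ k`) (defining
polynomial `x₁⋯x_k ∏_{i<j}(x_i−x_j)(x_i+x_j)`), is inductively free. -/
theorem Drk_inductively_free (r k : ℕ) (hk : k ≤ r)
    (A : Finset (Submodule ℝ (Fin r → ℝ)))
    (hA : ∀ H, H ∈ A ↔
      (∃ i j : Fin r, i < j ∧
        (H = LinearMap.ker ((LinearMap.proj i : (Fin r → ℝ) →ₗ[ℝ] ℝ) - LinearMap.proj j) ∨
         H = LinearMap.ker ((LinearMap.proj i : (Fin r → ℝ) →ₗ[ℝ] ℝ) + LinearMap.proj j))) ∨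
      (∃ i : Fin r, (i : ℕ) < k ∧
        H = LinearMap.ker (LinearMap.proj i : (Fin r → ℝ) →ₗ[ℝ] ℝ))) :
    ∃ e : Multiset ℕ, IndFree ⊤ A e :=
  Drk_inductively_free_general r k A hA
end
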